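/- arXiv:0804.3744 — 7 statements merged into one kernel-verified Lean document; each statement's English description precedes it below -/
import Mathlib

section
/- Let κ : [0,∞) → [0,∞) be continuous and satisfy the self-gravitation condition κ(x) < κ̄(x) for all x > 0, where κ̄(x) = (2/x²)∫₀ˣ κ(t)·t dt is the mean surface density. Then κ(x) < κ(0) for all x > 0. -/
/-!
A maximum of `κ` on `[0, x]` attained at some `c > 0` would bound the mean density at `c` by `κ c`,
contradicting `κ c < κ̄ c`. So `κ ≤ κ 0` on `[0, ∞)`, and then `κ x < κ̄ x ≤ κ 0`.
-/

open Set intervalIntegral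

noncomputable section

def meanDensity (κ : ℝ → ℝ) (x : ℝ) : ℝ := (2 / x ^ 2) * ∫ t in (0 : ℝ)..x, κ t * t

theorem meanDensity_const {x : ℝ} (hx : x ≠ 0) (B : ℝ) : meanDensity (fun _ => B) x = B := by
  rw [meanDensity, integral_const_mul, integral_id]
  field_simp
  ring

theorem meanDensity_le_of_le {κ : ℝ → ℝ} {x B : ℝ} (hx : 0 < x)
    (hκ : IntervalIntegrable κ MeasureTheory.volume 0 x) (hB : ∀ t ∈ Icc 0 x, κ t ≤ B) :
    meanDensity κ x ≤ B := by
  have hmono : ∫ t in (0 : ℝ)..x, κ t * t ≤ ∫ t in (0 : ℝ)..x, B * t :=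
    integral_mono_on hx.le (hκ.mul_continuousOn continuousOn_id)
      ((continuous_const_mul B).intervalIntegrable 0 x)
      fun t ht => mul_le_mul_of_nonneg_right (hB t ht) ht.1
  calc meanDensity κ x ≤ meanDensity (fun _ => B) x :=
        mul_le_mul_of_nonneg_left hmono (by positivity)
    _ = B := meanDensity_const hx.ne' B

theorem le_apply_zero_of_lt_meanDensity {κ : ℝ → ℝ} (hcont : ContinuousOn κ (Ici 0))
    (hself : ∀ x, 0 < x → κ x < meanDensity κ x) {x : ℝ} (hx : 0 ≤ x) : κ x ≤ κ 0 := by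
  obtain ⟨c, ⟨hc0, hcx⟩, hmax⟩ := isCompact_Icc.exists_isMaxOn (nonempty_Icc.mpr hx)
    (hcont.mono Icc_subset_Ici_self)
  rcases hc0.eq_or_lt with rfl | hc_pos
  · exact hmax ⟨hx, le_rfl⟩
  · have hbound : meanDensity κ c ≤ κ c :=
      meanDensity_le_of_le hc_pos
        ((hcont.mono Icc_subset_Ici_self).intervalIntegrable_of_Icc hc0)
        fun t ht => hmax ⟨ht.1, ht.2.trans hcx⟩
    exact absurd (hself c hc_pos) hbound.not_gt

end

theorem surface_density_lt_central_general
    (κ : ℝ → ℝ)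
    (hcont : ContinuousOn κ (Set.Ici 0))
    (hself : ∀ x : ℝ, 0 < x →
      κ x < (2 / x ^ 2) * ∫ t in (0 : ℝ)..x, κ t * t) :
    ∀ x : ℝ, 0 < x → κ x < κ 0 := fun x hx =>
  calc κ x < meanDensity κ x := hself x hx
    _ ≤ κ 0 := meanDensity_le_of_le hx
        ((hcont.mono Icc_subset_Ici_self).intervalIntegrable_of_Icc hx.le)
        fun _ ht => le_apply_zero_of_lt_meanDensity hcont hself ht.1

/-- If `κ : [0,∞) → [0,∞)` is continuous and self-gravitating,
i.e. `κ x < κ̄ x = (2/x²) ∫₀ˣ κ t · t dt` for all `x > 0`, then `κ x < κ 0` for all `x > 0`. -/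
theorem surface_density_lt_central
    (κ : ℝ → ℝ)
    (hcont : ContinuousOn κ (Set.Ici 0))
    (hnonneg : ∀ x ∈ Set.Ici (0 : ℝ), 0 ≤ κ x)
    (hself : ∀ x : ℝ, 0 < x →
      κ x < (2 / x ^ 2) * ∫ t in (0 : ℝ)..x, κ t * t) :
    ∀ x : ℝ, 0 < x → κ x < κ 0 :=
  surface_density_lt_central_general κ hcont hself
end

section
/- Let κ : [0,∞) → [0,∞) be continuous and self-gravitating (κ(x) < κ̄(x) for all x > 0, where κ̄(x) = (2/x²)∫₀ˣ κ(t)·t dt), and define α(x) = (2/x)∫₀ˣ κ(t)·t dt. Then α is differentiable on (0,∞) with α′(x) = 2κ(x) − α(x)/x, and at any Einstein ring radius x_E > 0 (i.e. α(x_E) = x_E) one has α′(x_E) = 2κ(x_E) − 1 < 1. -/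
/-! Since `α x = 2/x · ∫₀ˣ κ t · t dt`, the fundamental theorem of calculus and the product rule
give `α' = 2κ − α/x`. At a ring `α x_E / x_E = κ̄ x_E = 1`, and self-gravitation `κ < κ̄` then
gives `2κ x_E − 1 < 1`. -/

open Set Filter Topology

theorem hasDerivAt_integral_of_continuousOn_Ici {f : ℝ → ℝ} {a x : ℝ}
    (hf : ContinuousOn f (Ici a)) (hx : a < x) :
    HasDerivAt (fun u => ∫ t in a..u, f t) (f x) x := by
  have hIci : Ici a ∈ 𝓝 x := Ici_mem_nhds hx
  refine intervalIntegral.integral_hasDerivAt_right ?_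
    ⟨Ici a, hIci, hf.aestronglyMeasurable measurableSet_Ici⟩ (hf.continuousAt hIci)
  exact (hf.mono (by rw [uIcc_of_le hx.le]; exact Icc_subset_Ici_self)).intervalIntegrable

theorem HasDerivAt.const_div_mul {F : ℝ → ℝ} {F' x : ℝ} (hF : HasDerivAt F F' x)
    (hx : x ≠ 0) (c : ℝ) :
    HasDerivAt (fun u => c / u * F u) (c * F' / x - c / x * F x / x) x := by
  have hinv : HasDerivAt (fun u => c / u) (-c / x ^ 2) x := by
    simpa [div_eq_mul_inv, neg_div] using (hasDerivAt_inv hx).const_mul c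
  refine (hinv.mul hF).congr_deriv ?_
  field_simp
  ring

theorem deflection_angle_deriv_at_ring_general
    (κ : ℝ → ℝ) (α : ℝ → ℝ)
    (hcont : ContinuousOn κ (Set.Ici 0))
    (hself : ∀ x : ℝ, 0 < x →
      κ x < (2 / x ^ 2) * ∫ t in (0 : ℝ)..x, κ t * t)
    (hα : ∀ x : ℝ, 0 < x → α x = (2 / x) * ∫ t in (0 : ℝ)..x, κ t * t) :
    (∀ x : ℝ, 0 < x → HasDerivAt α (2 * κ x - α x / x) x) ∧
    (∀ xE : ℝ, 0 < xE → α xE = xE →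
      HasDerivAt α (2 * κ xE - 1) xE ∧ 2 * κ xE - 1 < 1) := by
  have hderiv : ∀ x : ℝ, 0 < x → HasDerivAt α (2 * κ x - α x / x) x := by
    intro x hx
    have hα_nhds : (fun u => 2 / u * ∫ t in (0 : ℝ)..u, κ t * t) =ᶠ[𝓝 x] α :=
      eventually_of_mem (Ioi_mem_nhds hx) fun u hu => (hα u hu).symm
    have hf : ContinuousOn (fun t => κ t * t) (Ici 0) := hcont.mul continuousOn_id
    have hmean := (hasDerivAt_integral_of_continuousOn_Ici hf hx).const_div_mul hx.ne' 2
    refine (hmean.congr_of_eventuallyEq hα_nhds.symm).congr_deriv ?_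
    rw [hα x hx]
    field_simp
  refine ⟨hderiv, fun xE hxE hring => ?_⟩
  have hratio : α xE / xE = 1 := by rw [hring, div_self hxE.ne']
  have hκ : κ xE < α xE / xE := by
    convert hself xE hxE using 1
    rw [hα xE hxE]
    ring
  exact ⟨hratio ▸ hderiv xE hxE, by linarith⟩

/-- For a continuous, self-gravitating `κ : [0,∞) → [0,∞)` and the
normalized deflection angle `α x = (2/x) ∫₀ˣ κ t · t dt`, the map `α` is differentiable
on `(0,∞)` with `α' x = 2·κ x − α x / x`, and at any Einstein ring radius `x_E > 0`
(i.e. `α x_E = x_E`) one has `α'(x_E) = 2·κ x_E − 1 < 1`. -/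
theorem deflection_angle_deriv_at_ring
    (κ : ℝ → ℝ) (α : ℝ → ℝ)
    (hcont : ContinuousOn κ (Set.Ici 0))
    (hnonneg : ∀ x ∈ Set.Ici (0 : ℝ), 0 ≤ κ x)
    (hself : ∀ x : ℝ, 0 < x →
      κ x < (2 / x ^ 2) * ∫ t in (0 : ℝ)..x, κ t * t)
    (hα : ∀ x : ℝ, 0 < x → α x = (2 / x) * ∫ t in (0 : ℝ)..x, κ t * t) :
    (∀ x : ℝ, 0 < x → HasDerivAt α (2 * κ x - α x / x) x) ∧
    (∀ xE : ℝ, 0 < xE → α xE = xE →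
      HasDerivAt α (2 * κ xE - 1) xE ∧ 2 * κ xE - 1 < 1) :=
  deflection_angle_deriv_at_ring_general κ α hcont hself hα
end

section
/- Let ξ₀ > 0, 0 ≤ β ≤ 1, c ≥ 1, and m⁽¹⁾, m⁽²⁾ ∈ (0,1) with m⁽¹⁾ + m⁽²⁾ = 1. Define m₊ = ξ₀(m⁽¹⁾ + c·m⁽²⁾), m₋ = ξ₀(m⁽¹⁾ − c·m⁽²⁾), and F : (0,∞) → ℝ by F(x) = 1 − m₊/x if x ≥ β·ξ₀·m⁽¹⁾ and F(x) = 1 − m₋/x if 0 < x < β·ξ₀·m⁽¹⁾. Then the set of x > 0 with F(x) = 0 is exactly {m₊} if it is not the case that 0 < m₋ < β·ξ₀·m⁽¹⁾, and exactly {m₊, m₋} if 0 < m₋ < β·ξ₀·m⁽¹⁾. Hence two aligned singular isothermal spheres in different lens planes produce either one or two Einstein rings of a single aligned point source. -/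
/-! Each branch `1 - m / x` of the lens map vanishes only at `x = m`. The outer branch `x ≥ β ξ₀ m⁽¹⁾`
always contributes its root `m₊`, because `m₊ ≥ ξ₀ m⁽¹⁾ ≥ β ξ₀ m⁽¹⁾`; the inner branch contributes
`m₋` exactly when `m₋` lies in its domain `(0, β ξ₀ m⁽¹⁾)`. -/

theorem one_sub_div_eq_zero_iff {a x : ℝ} (hx : x ≠ 0) : 1 - a / x = 0 ↔ x = a := by
  rw [sub_eq_zero, eq_comm, div_eq_one_iff_eq hx, eq_comm]

section PiecewiseRadialMap

variable {t a b : ℝ} {F : ℝ → ℝ}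

theorem piecewise_one_sub_div_eq_zero_iff (hta : t ≤ a)
    (hF : ∀ x : ℝ, 0 < x → F x = if t ≤ x then 1 - a / x else 1 - b / x)
    {x : ℝ} (hx : 0 < x) : F x = 0 ↔ x = a ∨ (x = b ∧ b < t) := by
  rw [hF x hx]
  split_ifs with h
  · rw [one_sub_div_eq_zero_iff hx.ne']
    constructor
    · exact Or.inl
    · rintro (rfl | ⟨rfl, hbt⟩)
      · rfl
      · exact absurd h (not_le.2 hbt)
  · rw [one_sub_div_eq_zero_iff hx.ne']
    constructor
    · rintro rfl
      exact Or.inr ⟨rfl, not_le.1 h⟩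
    · rintro (rfl | ⟨rfl, -⟩)
      · exact absurd hta h
      · rfl

theorem setOf_piecewise_one_sub_div_eq_zero (ha : 0 < a) (hta : t ≤ a)
    (hF : ∀ x : ℝ, 0 < x → F x = if t ≤ x then 1 - a / x else 1 - b / x) :
    {x : ℝ | 0 < x ∧ F x = 0} = insert a {x | x = b ∧ 0 < b ∧ b < t} := by
  ext x
  simp only [Set.mem_ofPred_eq, Set.mem_insert_iff]
  constructor
  · rintro ⟨hx, hFx⟩
    rcases (piecewise_one_sub_div_eq_zero_iff hta hF hx).1 hFx with rfl | ⟨rfl, hbt⟩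
    · exact Or.inl rfl
    · exact Or.inr ⟨rfl, hx, hbt⟩
  · rintro (rfl | ⟨rfl, hb, hbt⟩)
    · exact ⟨ha, (piecewise_one_sub_div_eq_zero_iff hta hF ha).2 (Or.inl rfl)⟩
    · exact ⟨hb, (piecewise_one_sub_div_eq_zero_iff hta hF hb).2 (Or.inr ⟨rfl, hbt⟩)⟩

theorem setOf_piecewise_one_sub_div_eq_zero_of_not (ha : 0 < a) (hta : t ≤ a)
    (hF : ∀ x : ℝ, 0 < x → F x = if t ≤ x then 1 - a / x else 1 - b / x)
    (hb : ¬ (0 < b ∧ b < t)) : {x : ℝ | 0 < x ∧ F x = 0} = {a} := by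
  rw [setOf_piecewise_one_sub_div_eq_zero ha hta hF]
  simp [hb]

theorem setOf_piecewise_one_sub_div_eq_zero_of_mem (ha : 0 < a) (hta : t ≤ a)
    (hF : ∀ x : ℝ, 0 < x → F x = if t ≤ x then 1 - a / x else 1 - b / x)
    (hb : 0 < b ∧ b < t) : {x : ℝ | 0 < x ∧ F x = 0} = {a, b} := by
  rw [setOf_piecewise_one_sub_div_eq_zero ha hta hF]
  simp [hb]

end PiecewiseRadialMap

section TwoPlaneMass

variable {ξ₀ β c m₁ m₂ : ℝ}

theorem two_plane_mass_pos (hξ₀ : 0 < ξ₀) (hc : 0 ≤ c) (hm₁ : 0 < m₁) (hm₂ : 0 ≤ m₂) :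
    0 < ξ₀ * (m₁ + c * m₂) :=
  mul_pos hξ₀ (add_pos_of_pos_of_nonneg hm₁ (mul_nonneg hc hm₂))

theorem threshold_le_two_plane_mass (hξ₀ : 0 ≤ ξ₀) (hβ1 : β ≤ 1) (hc : 0 ≤ c)
    (hm₁ : 0 ≤ m₁) (hm₂ : 0 ≤ m₂) : β * ξ₀ * m₁ ≤ ξ₀ * (m₁ + c * m₂) :=
  calc β * ξ₀ * m₁ ≤ 1 * ξ₀ * m₁ := by gcongr
    _ = ξ₀ * m₁ := by ring
    _ ≤ ξ₀ * (m₁ + c * m₂) := by gcongr; exact le_add_of_nonneg_right (mul_nonneg hc hm₂)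

end TwoPlaneMass

theorem isothermal_two_plane_einstein_rings_general
    (ξ₀ β c m₁ m₂ : ℝ)
    (hξ₀ : 0 < ξ₀) (hβ1 : β ≤ 1) (hc : 1 ≤ c)
    (hm₁ : m₁ ∈ Set.Ioo (0 : ℝ) 1) (hm₂ : m₂ ∈ Set.Ioo (0 : ℝ) 1)
    (mp mm : ℝ)
    (hmp : mp = ξ₀ * (m₁ + c * m₂))
    (F : ℝ → ℝ)
    (hF : ∀ x : ℝ, 0 < x →
      F x = if β * ξ₀ * m₁ ≤ x then 1 - mp / x else 1 - mm / x) :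
    (¬ (0 < mm ∧ mm < β * ξ₀ * m₁) → {x : ℝ | 0 < x ∧ F x = 0} = {mp}) ∧
    ((0 < mm ∧ mm < β * ξ₀ * m₁) → {x : ℝ | 0 < x ∧ F x = 0} = {mp, mm}) := by
  have hc0 : 0 ≤ c := zero_le_one.trans hc
  have hmp_pos : 0 < mp := hmp ▸ two_plane_mass_pos hξ₀ hc0 hm₁.1 hm₂.1.le
  have hthreshold : β * ξ₀ * m₁ ≤ mp :=
    hmp ▸ threshold_le_two_plane_mass hξ₀.le hβ1 hc0 hm₁.1.le hm₂.1.le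
  exact ⟨setOf_piecewise_one_sub_div_eq_zero_of_not hmp_pos hthreshold hF,
    setOf_piecewise_one_sub_div_eq_zero_of_mem hmp_pos hthreshold hF⟩

/-- For two aligned singular isothermal spheres in two lens planes,
with `m₊ = ξ₀(m⁽¹⁾ + c·m⁽²⁾)`, `m₋ = ξ₀(m⁽¹⁾ − c·m⁽²⁾)` and radial map
`F x = 1 − m₊/x` for `x ≥ β·ξ₀·m⁽¹⁾`, `F x = 1 − m₋/x` for `0 < x < β·ξ₀·m⁽¹⁾`,
the Einstein-ring set `{x > 0 | F x = 0}` equals `{m₊}` unless `0 < m₋ < β·ξ₀·m⁽¹⁾`,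
in which case it equals `{m₊, m₋}`: one or two Einstein rings of a single source. -/
theorem isothermal_two_plane_einstein_rings
    (ξ₀ β c m₁ m₂ : ℝ)
    (hξ₀ : 0 < ξ₀) (hβ0 : 0 ≤ β) (hβ1 : β ≤ 1) (hc : 1 ≤ c)
    (hm₁ : m₁ ∈ Set.Ioo (0 : ℝ) 1) (hm₂ : m₂ ∈ Set.Ioo (0 : ℝ) 1)
    (hsum : m₁ + m₂ = 1)
    (mp mm : ℝ)
    (hmp : mp = ξ₀ * (m₁ + c * m₂))
    (hmm : mm = ξ₀ * (m₁ - c * m₂))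
    (F : ℝ → ℝ)
    (hF : ∀ x : ℝ, 0 < x →
      F x = if β * ξ₀ * m₁ ≤ x then 1 - mp / x else 1 - mm / x) :
    (¬ (0 < mm ∧ mm < β * ξ₀ * m₁) → {x : ℝ | 0 < x ∧ F x = 0} = {mp}) ∧
    ((0 < mm ∧ mm < β * ξ₀ * m₁) → {x : ℝ | 0 < x ∧ F x = 0} = {mp, mm}) :=
  isothermal_two_plane_einstein_rings_general ξ₀ β c m₁ m₂ hξ₀ hβ1 hc hm₁ hm₂ mp mm hmp F hF
end

section
/- Let ξ₀ > 0, 0 ≤ β ≤ 1, c ≥ 1, m⁽¹⁾, m⁽²⁾ ∈ (0,1) with m⁽¹⁾ + m⁽²⁾ = 1, and set m₊ = ξ₀(m⁽¹⁾ + c·m⁽²⁾), m₋ = ξ₀(m⁽¹⁾ − c·m⁽²⁾), b = β·ξ₀·m⁽¹⁾. Define the signed magnification μ(x) = 1/(1 − m₊/|x|) if |x| ≥ b and μ(x) = 1/(1 − m₋/|x|) if 0 < |x| < b. Suppose y > 0 lies in the maximal domain where all four images exist, i.e. 0 < y + m₋ < b, y − m₊ ≤ −b, and −b < y − m₋ <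 0, and set x₁ = y + m₊, x₂ = y + m₋, x₃ = y − m₊, x₄ = y − m₋. Then μ(x₁) + μ(x₂) + μ(x₃) + μ(x₄) = 4. -/
/-! Every image `x` of the source `y` solves the one-plane lens equation `y = x - m · sign x` with
`m = m₊` or `m = m₋` according to its branch, so its magnification is `1 / (1 - m / |x|) = x / y`.
The four images are `y ± m₊` and `y ± m₋`, hence the magnifications add up to `4y / y = 4`. -/

lemma one_div_one_sub_div_abs_add_of_pos {y m : ℝ} (h : 0 < y + m) :
    1 / (1 - m / |y + m|) = (y + m) / y := by
  have hdet : 1 - m / (y + m) = y / (y + m) := by field_simp; ring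
  rw [abs_of_pos h, hdet, one_div_div]

lemma one_div_one_sub_div_abs_sub_of_neg {y m : ℝ} (h : y - m < 0) :
    1 / (1 - m / |y - m|) = (y - m) / y := by
  have hdet : 1 - m / (m - y) = y / (y - m) := by
    rw [← neg_sub y m, div_neg, sub_neg_eq_add]
    field_simp [h.ne]
    ring
  rw [abs_of_neg h, neg_sub, hdet, one_div_div]

theorem isothermal_two_plane_magnification_invariant_general
    (mp mm b : ℝ)
    (μ : ℝ → ℝ)
    (hμ : ∀ x : ℝ, x ≠ 0 →
      μ x = if b ≤ |x| then 1 / (1 - mp / |x|) else 1 / (1 - mm / |x|))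
    (y : ℝ) (hy : 0 < y)
    (h₂ : 0 < y + mm ∧ y + mm < b)
    (h₃ : y - mp ≤ -b)
    (h₄ : -b < y - mm ∧ y - mm < 0) :
    μ (y + mp) + μ (y + mm) + μ (y - mp) + μ (y - mm) = 4 := by
  obtain ⟨hx₂, hx₂b⟩ := h₂
  obtain ⟨hx₄b, hx₄⟩ := h₄
  have hx₁ : 0 < y + mp := by linarith
  have hx₃ : y - mp < 0 := by linarith
  have hμ₁ : μ (y + mp) = (y + mp) / y := by
    rw [hμ _ hx₁.ne', if_pos (by rw [abs_of_pos hx₁]; linarith),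
      one_div_one_sub_div_abs_add_of_pos hx₁]
  have hμ₂ : μ (y + mm) = (y + mm) / y := by
    rw [hμ _ hx₂.ne', if_neg (by rw [abs_of_pos hx₂]; linarith),
      one_div_one_sub_div_abs_add_of_pos hx₂]
  have hμ₃ : μ (y - mp) = (y - mp) / y := by
    rw [hμ _ hx₃.ne, if_pos (by rw [abs_of_neg hx₃]; linarith),
      one_div_one_sub_div_abs_sub_of_neg hx₃]
  have hμ₄ : μ (y - mm) = (y - mm) / y := by
    rw [hμ _ hx₄.ne, if_neg (by rw [abs_of_neg hx₄]; linarith),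
      one_div_one_sub_div_abs_sub_of_neg hx₄]
  rw [hμ₁, hμ₂, hμ₃, hμ₄]
  field_simp
  ring

/-- **magnification invariant, isothermal case.** With signed
magnification `μ x = 1/(1 − m₊/|x|)` for `|x| ≥ b` and `μ x = 1/(1 − m₋/|x|)` for
`0 < |x| < b`, if `y > 0` lies in the maximal domain where all four images
`x₁ = y + m₊`, `x₂ = y + m₋`, `x₃ = y − m₊`, `x₄ = y − m₋` exist, then
`μ x₁ + μ x₂ + μ x₃ + μ x₄ = 4`. -/
theorem isothermal_two_plane_magnification_invariant
    (ξ₀ β c m₁ m₂ : ℝ)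
    (hξ₀ : 0 < ξ₀) (hβ0 : 0 ≤ β) (hβ1 : β ≤ 1) (hc : 1 ≤ c)
    (hm₁ : m₁ ∈ Set.Ioo (0 : ℝ) 1) (hm₂ : m₂ ∈ Set.Ioo (0 : ℝ) 1)
    (hsum : m₁ + m₂ = 1)
    (mp mm b : ℝ)
    (hmp : mp = ξ₀ * (m₁ + c * m₂))
    (hmm : mm = ξ₀ * (m₁ - c * m₂))
    (hb : b = β * ξ₀ * m₁)
    (μ : ℝ → ℝ)
    (hμ : ∀ x : ℝ, x ≠ 0 →
      μ x = if b ≤ |x| then 1 / (1 - mp / |x|) else 1 / (1 - mm / |x|))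
    (y : ℝ) (hy : 0 < y)
    (h₂ : 0 < y + mm ∧ y + mm < b)
    (h₃ : y - mp ≤ -b)
    (h₄ : -b < y - mm ∧ y - mm < 0) :
    μ (y + mp) + μ (y + mm) + μ (y - mp) + μ (y - mm) = 4 :=
  isothermal_two_plane_magnification_invariant_general mp mm b μ hμ y hy h₂ h₃ h₄
end

section
/- Let y > 0, 0 < β < 1, and 0 < m < 1. Then the quartic polynomial p(x) = x⁴ − y·x³ − (1 + β·m)·x² + y·β·m·x + β·m² has four real roots; that is, every complex root of p is real (p splits over ℝ). -/
/-!
Write `p` for the quartic. It factors as `p(x) = (x² − βm)(x² − yx − 1) + βm(m − 1)`, so at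
`x = ±√(βm)` it takes the negative value `βm(m − 1)`, while `p(0) = βm² > 0` and `p(x) > 0` for
`|x| ≥ |y| + 2`. The signs at `−(|y| + 2) < −√(βm) < 0 < √(βm) < |y| + 2` alternate, so the
intermediate value theorem gives four distinct real roots; a quartic has no room for more roots,
so every complex root is one of them.
-/

open Polynomial Set

theorem exists_mem_Ioo_eq_zero_of_mul_neg {α : Type*} [ConditionallyCompleteLinearOrder α]
    [TopologicalSpace α] [OrderTopology α] [DenselyOrdered α] {f : α → ℝ} {a b : α}
    (hab : a ≤ b) (hf : ContinuousOn f (Icc a b)) (hsign : f a * f b < 0) :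
    ∃ c ∈ Ioo a b, f c = 0 := by
  rcases mul_neg_iff.1 hsign with ⟨ha, hb⟩ | ⟨ha, hb⟩
  · exact intermediate_value_Ioo' hab hf ⟨hb, ha⟩
  · exact intermediate_value_Ioo hab hf ⟨ha, hb⟩

theorem exists_finset_card_eq_zero_of_sign_changes {α : Type*}
    [ConditionallyCompleteLinearOrder α] [TopologicalSpace α] [OrderTopology α]
    [DenselyOrdered α] {f : α → ℝ} (hf : Continuous f) {n : ℕ} {a : Fin (n + 1) → α}
    (ha : StrictMono a) (hsign : ∀ i : Fin n, f (a i.castSucc) * f (a i.succ) < 0) :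
    ∃ s : Finset α, s.card = n ∧ ∀ r ∈ s, f r = 0 := by
  classical
  choose r hr hfr using fun i : Fin n ↦
    exists_mem_Ioo_eq_zero_of_mul_neg (ha Fin.castSucc_lt_succ).le hf.continuousOn (hsign i)
  have hr_mono : StrictMono r := fun i j hij ↦
    calc r i < a i.succ := (hr i).2
      _ ≤ a j.castSucc := ha.monotone (Fin.succ_le_castSucc_iff.2 hij)
      _ < r j := (hr j).1
  refine ⟨Finset.univ.image r, ?_, ?_⟩
  · rw [Finset.card_image_of_injective _ hr_mono.injective, Finset.card_fin]
  · simp only [Finset.mem_image, Finset.mem_univ, true_and, forall_exists_index]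
    rintro _ i rfl
    exact hfr i

theorem Polynomial.mem_range_of_isRoot_map_of_natDegree_le_card {A B : Type*} [CommRing A]
    [IsDomain A] [CommRing B] [IsDomain B] {f : A →+* B} (hf : Function.Injective f)
    {p : A[X]} (hp : p ≠ 0) {s : Finset A} (hs : ∀ r ∈ s, p.IsRoot r)
    (hdeg : p.natDegree ≤ s.card) {z : B} (hz : (p.map f).IsRoot z) : z ∈ Set.range f := by
  have hs_roots : s.val ≤ p.roots :=
    Finset.val_le_iff_val_subset.2 fun r hr ↦ (mem_roots hp).2 (hs r hr)
  have hcard : p.roots.card = p.natDegree :=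
    (card_roots' p).antisymm (hdeg.trans (Multiset.card_le_card hs_roots))
  have hz_mem : z ∈ p.roots.map f := by
    rw [roots_map_of_injective_of_card_eq_natDegree hf hcard,
      mem_roots ((Polynomial.map_ne_zero_iff hf).2 hp)]
    exact hz
  obtain ⟨r, -, rfl⟩ := Multiset.mem_map.1 hz_mem
  exact ⟨r, rfl⟩

noncomputable def lensQuartic (y β m : ℝ) : ℝ[X] :=
  X ^ 4 - C y * X ^ 3 - C (1 + β * m) * X ^ 2 + C (y * β * m) * X + C (β * m ^ 2)

section lensQuartic

variable (y β m : ℝ)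

theorem natDegree_lensQuartic : (lensQuartic y β m).natDegree = 4 := by
  unfold lensQuartic
  compute_degree!

theorem eval_lensQuartic (x : ℝ) :
    (lensQuartic y β m).eval x = (x ^ 2 - β * m) * (x ^ 2 - y * x - 1) + β * m * (m - 1) := by
  simp only [lensQuartic, eval_add, eval_sub, eval_mul, eval_pow, eval_C, eval_X]
  ring

theorem eval_lensQuartic_zero : (lensQuartic y β m).eval 0 = β * m ^ 2 := by
  rw [eval_lensQuartic]
  ring

theorem eval_lensQuartic_of_sq_eq {x : ℝ} (hx : x ^ 2 = β * m) :
    (lensQuartic y β m).eval x = β * m * (m - 1) := by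
  rw [eval_lensQuartic, hx, sub_self, zero_mul, zero_add]

theorem eval_lensQuartic_pos_of_le_abs {x : ℝ} (hβ : β ∈ Ioo (0 : ℝ) 1) (hm : m ∈ Ioo (0 : ℝ) 1)
    (hx : |y| + 2 ≤ |x|) : 0 < (lensQuartic y β m).eval x := by
  obtain ⟨hβ0, hβ1⟩ := hβ
  obtain ⟨hm0, hm1⟩ := hm
  have hyx : y * x ≤ |y| * |x| := abs_mul y x ▸ le_abs_self (y * x)
  have hx_sq : x ^ 2 = |x| ^ 2 := (sq_abs x).symm
  have hbm : β * m < 1 := by nlinarith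
  have hleft : 3 ≤ x ^ 2 - β * m := by nlinarith [abs_nonneg y]
  have hright : 3 ≤ x ^ 2 - y * x - 1 := by nlinarith [abs_nonneg y]
  rw [eval_lensQuartic]
  nlinarith [mul_pos hβ0 hm0]

theorem exists_finset_card_four_isRoot_lensQuartic (hβ : β ∈ Ioo (0 : ℝ) 1)
    (hm : m ∈ Ioo (0 : ℝ) 1) :
    ∃ s : Finset ℝ, s.card = 4 ∧ ∀ r ∈ s, (lensQuartic y β m).IsRoot r := by
  set p := lensQuartic y β m
  set s := √(β * m)
  set L := |y| + 2
  have hbm : 0 < β * m := mul_pos hβ.1 hm.1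
  have hs_pos : 0 < s := Real.sqrt_pos.2 hbm
  have hs_lt : s < L := by
    have : s < 1 := (Real.sqrt_lt' one_pos).2 (by nlinarith [hβ.1, hβ.2, hm.1, hm.2])
    linarith [abs_nonneg y]
  have hp_neg : β * m * (m - 1) < 0 := mul_neg_of_pos_of_neg hbm (by linarith [hm.2])
  have hp_s : p.eval s < 0 :=
    (eval_lensQuartic_of_sq_eq y β m (Real.sq_sqrt hbm.le)).trans_lt hp_neg
  have hp_neg_s : p.eval (-s) < 0 :=
    (eval_lensQuartic_of_sq_eq y β m (by rw [neg_sq, Real.sq_sqrt hbm.le])).trans_lt hp_neg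
  have hp_zero : 0 < p.eval 0 :=
    (eval_lensQuartic_zero y β m).symm ▸ mul_pos hβ.1 (pow_pos hm.1 2)
  have hL : |L| = L := abs_of_pos (by positivity)
  have hp_L : 0 < p.eval L := eval_lensQuartic_pos_of_le_abs y β m hβ hm hL.ge
  have hp_neg_L : 0 < p.eval (-L) :=
    eval_lensQuartic_pos_of_le_abs y β m hβ hm (by rw [abs_neg, hL])
  refine exists_finset_card_eq_zero_of_sign_changes p.continuous (a := ![-L, -s, 0, s, L])
    (Fin.strictMono_iff_lt_succ.2 fun i ↦ ?_) fun i ↦ ?_ <;>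
    fin_cases i <;>
    simp only [Fin.zero_eta, Fin.mk_one, Fin.reduceFinMk, Fin.isValue, Fin.castSucc_zero,
      Fin.castSucc_one, Fin.reduceCastSucc, Fin.succ_zero_eq_one, Fin.succ_one_eq_two,
      Fin.reduceSucc, Matrix.cons_val_zero, Matrix.cons_val_one, Matrix.cons_val]
  exacts [neg_lt_neg hs_lt, neg_neg_of_pos hs_pos, hs_pos, hs_lt,
    mul_neg_of_pos_of_neg hp_neg_L hp_neg_s, mul_neg_of_neg_of_pos hp_neg_s hp_zero,
    mul_neg_of_pos_of_neg hp_zero hp_s, mul_neg_of_neg_of_pos hp_s hp_L]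

end lensQuartic

theorem two_point_lens_quartic_roots_real_general
    (y β m : ℝ) (hβ : β ∈ Set.Ioo (0 : ℝ) 1)
    (hm : m ∈ Set.Ioo (0 : ℝ) 1) :
    ∀ z : ℂ,
      z ^ 4 - (y : ℂ) * z ^ 3 - ((1 : ℂ) + (β : ℂ) * (m : ℂ)) * z ^ 2
        + (y : ℂ) * (β : ℂ) * (m : ℂ) * z + (β : ℂ) * (m : ℂ) ^ 2 = 0 →
      z.im = 0 := by
  intro z hz
  obtain ⟨roots, hcard, hroots⟩ := exists_finset_card_four_isRoot_lensQuartic y β m hβ hm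
  have hp : lensQuartic y β m ≠ 0 :=
    ne_zero_of_natDegree_gt (n := 0) (by rw [natDegree_lensQuartic]; norm_num)
  have hz_root : ((lensQuartic y β m).map Complex.ofRealHom).IsRoot z := by
    simpa [lensQuartic] using hz
  obtain ⟨r, rfl⟩ := mem_range_of_isRoot_map_of_natDegree_le_card Complex.ofReal_injective hp
    hroots (by rw [natDegree_lensQuartic, hcard]) hz_root
  exact Complex.ofReal_im r

/-- For `y > 0`, `0 < β < 1`, `0 < m < 1`, every complex root of the
image quartic `x⁴ − y·x³ − (1 + β·m)·x² + y·β·m·x + β·m²` is real: the quartic has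
four real roots (it splits over `ℝ`). -/
theorem two_point_lens_quartic_roots_real
    (y β m : ℝ) (hy : 0 < y) (hβ : β ∈ Set.Ioo (0 : ℝ) 1)
    (hm : m ∈ Set.Ioo (0 : ℝ) 1) :
    ∀ z : ℂ,
      z ^ 4 - (y : ℂ) * z ^ 3 - ((1 : ℂ) + (β : ℂ) * (m : ℂ)) * z ^ 2
        + (y : ℂ) * (β : ℂ) * (m : ℂ) * z + (β : ℂ) * (m : ℂ) ^ 2 = 0 →
      z.im = 0 :=
  two_point_lens_quartic_roots_real_general y β m hβ hm
end

section
/- Let y > 0, 0 < β < 1, and 0 < m < 1. With P = −3y²/8 − (1 + β·m), Q = −y³/8 − (y/2)·(1 − β·m), R = −3y⁴/256 − (y²/16)·(1 − 3β·m) + β·m², and A = 2P, B = P² − 4R, C = −Q², the discriminant of the cubic resolvent satisfies D_res = ((3B − A²)/9)³ + ((2A³ − 9AB + 27C)/54)² ≤ 0; hence the cubic resolvent z³ + A·z² + B·z + C has three real roots. -/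
/-!
The image quartic `f` is negative at `±√(βm)` and positive at `0` and at `±(y + 2)`, so by the
intermediate value theorem it has four real roots; hence so does the reduced quartic
`f (z + y/4)`, say `t₁, …, t₄` with `t₁ + t₂ + t₃ + t₄ = 0`. The roots of the cubic resolvent
are then the squares `(t₁ + t₂)², (t₁ + t₃)², (t₁ + t₄)²`, all real, and for a cubic with real
roots `u, v, w` the quantity `D_res` equals `-((u - v)(u - w)(v - w))² / 108 ≤ 0`.
-/

theorem quadratic_eq_mul_of_roots {p q r s : ℝ} (hrs : r ≠ s)
    (hr : r ^ 2 + p * r + q = 0) (hs : s ^ 2 + p * s + q = 0) (x : ℝ) :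
    x ^ 2 + p * x + q = (x - r) * (x - s) := by
  have hp : p + r + s = 0 :=
    mul_left_cancel₀ (sub_ne_zero.mpr hrs) (by linear_combination hr - hs)
  linear_combination hr + (x - r) * hp

theorem cubic_eq_mul_of_roots {a b c r₁ r₂ r₃ : ℝ}
    (h₁₂ : r₁ ≠ r₂) (h₁₃ : r₁ ≠ r₃) (h₂₃ : r₂ ≠ r₃)
    (h₁ : r₁ ^ 3 + a * r₁ ^ 2 + b * r₁ + c = 0) (h₂ : r₂ ^ 3 + a * r₂ ^ 2 + b * r₂ + c = 0)
    (h₃ : r₃ ^ 3 + a * r₃ ^ 2 + b * r₃ + c = 0) (x : ℝ) :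
    x ^ 3 + a * x ^ 2 + b * x + c = (x - r₁) * (x - r₂) * (x - r₃) := by
  have deflate : ∀ s, s ^ 3 + a * s ^ 2 + b * s + c = 0 → r₁ ≠ s →
      s ^ 2 + (a + r₁) * s + (b + (a + r₁) * r₁) = 0 := fun s hs h₁s =>
    mul_left_cancel₀ (sub_ne_zero.mpr h₁s.symm) (by linear_combination hs - h₁)
  have hq := quadratic_eq_mul_of_roots h₂₃ (deflate r₂ h₂ h₁₂) (deflate r₃ h₃ h₁₃) x
  linear_combination h₁ + (x - r₁) * hq

theorem quartic_eq_mul_of_roots {a b c d r₁ r₂ r₃ r₄ : ℝ}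
    (h₁₂ : r₁ ≠ r₂) (h₁₃ : r₁ ≠ r₃) (h₁₄ : r₁ ≠ r₄)
    (h₂₃ : r₂ ≠ r₃) (h₂₄ : r₂ ≠ r₄) (h₃₄ : r₃ ≠ r₄)
    (h₁ : r₁ ^ 4 + a * r₁ ^ 3 + b * r₁ ^ 2 + c * r₁ + d = 0)
    (h₂ : r₂ ^ 4 + a * r₂ ^ 3 + b * r₂ ^ 2 + c * r₂ + d = 0)
    (h₃ : r₃ ^ 4 + a * r₃ ^ 3 + b * r₃ ^ 2 + c * r₃ + d = 0)
    (h₄ : r₄ ^ 4 + a * r₄ ^ 3 + b * r₄ ^ 2 + c * r₄ + d = 0) (x : ℝ) :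
    x ^ 4 + a * x ^ 3 + b * x ^ 2 + c * x + d = (x - r₁) * (x - r₂) * (x - r₃) * (x - r₄) := by
  have deflate : ∀ s, s ^ 4 + a * s ^ 3 + b * s ^ 2 + c * s + d = 0 → r₁ ≠ s →
      s ^ 3 + (a + r₁) * s ^ 2 + (b + (a + r₁) * r₁) * s
        + (c + (b + (a + r₁) * r₁) * r₁) = 0 := fun s hs h₁s =>
    mul_left_cancel₀ (sub_ne_zero.mpr h₁s.symm) (by linear_combination hs - h₁)
  have hc := cubic_eq_mul_of_roots h₂₃ h₂₄ h₃₄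
    (deflate r₂ h₂ h₁₂) (deflate r₃ h₃ h₁₃) (deflate r₄ h₄ h₁₄) x
  linear_combination h₁ + (x - r₁) * hc

theorem cubic_vieta {A B C u v w : ℝ}
    (h : ∀ z, z ^ 3 + A * z ^ 2 + B * z + C = (z - u) * (z - v) * (z - w)) :
    A = -(u + v + w) ∧ B = u * v + u * w + v * w ∧ C = -(u * v * w) := by
  have h₀ := h 0
  have h₁ := h 1
  have hn₁ := h (-1)
  refine ⟨?_, ?_, ?_⟩
  · linear_combination (1 / 2 : ℝ) * h₁ + (1 / 2 : ℝ) * hn₁ - h₀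
  · linear_combination (1 / 2 : ℝ) * h₁ - (1 / 2 : ℝ) * hn₁
  · linear_combination h₀

theorem quartic_vieta {a b c d t₁ t₂ t₃ t₄ : ℝ}
    (h : ∀ z, z ^ 4 + a * z ^ 3 + b * z ^ 2 + c * z + d
      = (z - t₁) * (z - t₂) * (z - t₃) * (z - t₄)) :
    a = -(t₁ + t₂ + t₃ + t₄) ∧
      b = t₁ * t₂ + t₁ * t₃ + t₁ * t₄ + t₂ * t₃ + t₂ * t₄ + t₃ * t₄ ∧
      c = -(t₁ * t₂ * t₃ + t₁ * t₂ * t₄ + t₁ * t₃ * t₄ + t₂ * t₃ * t₄) ∧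
      d = t₁ * t₂ * t₃ * t₄ := by
  have h₀ := h 0
  have h₁ := h 1
  have hn₁ := h (-1)
  have h₂ := h 2
  have hn₂ := h (-2)
  refine ⟨?_, ?_, ?_, ?_⟩
  · linear_combination (1 / 12 : ℝ) * (h₂ - hn₂) - (1 / 6 : ℝ) * (h₁ - hn₁)
  · linear_combination (1 / 2 : ℝ) * (h₁ + hn₁) - h₀
  · linear_combination (2 / 3 : ℝ) * (h₁ - hn₁) - (1 / 12 : ℝ) * (h₂ - hn₂)
  · linear_combination h₀

theorem cubic_discriminant_nonpos_of_eq_mul {A B C u v w : ℝ}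
    (h : ∀ z, z ^ 3 + A * z ^ 2 + B * z + C = (z - u) * (z - v) * (z - w)) :
    ((3 * B - A ^ 2) / 9) ^ 3 + ((2 * A ^ 3 - 9 * A * B + 27 * C) / 54) ^ 2 ≤ 0 := by
  obtain ⟨rfl, rfl, rfl⟩ := cubic_vieta h
  have hdisc : ((3 * (u * v + u * w + v * w) - (-(u + v + w)) ^ 2) / 9) ^ 3
      + ((2 * (-(u + v + w)) ^ 3 - 9 * (-(u + v + w)) * (u * v + u * w + v * w)
        + 27 * (-(u * v * w))) / 54) ^ 2
      = -((u - v) * (u - w) * (v - w)) ^ 2 / 108 := by ring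
  rw [hdisc]
  have := sq_nonneg ((u - v) * (u - w) * (v - w))
  linarith

theorem resolvent_eq_mul_of_reduced_quartic_eq_mul {P Q R t₁ t₂ t₃ t₄ : ℝ}
    (h : ∀ z, z ^ 4 + P * z ^ 2 + Q * z + R = (z - t₁) * (z - t₂) * (z - t₃) * (z - t₄))
    (z : ℝ) :
    z ^ 3 + 2 * P * z ^ 2 + (P ^ 2 - 4 * R) * z + -Q ^ 2
      = (z - (t₁ + t₂) ^ 2) * (z - (t₁ + t₃) ^ 2) * (z - (t₁ + t₄) ^ 2) := by
  have h' : ∀ z, z ^ 4 + 0 * z ^ 3 + P * z ^ 2 + Q * z + R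
      = (z - t₁) * (z - t₂) * (z - t₃) * (z - t₄) := fun z => by linear_combination h z
  obtain ⟨hsum, rfl, rfl, rfl⟩ := quartic_vieta h'
  obtain rfl : t₄ = -(t₁ + t₂ + t₃) := by linarith
  ring

def imageQuartic (y β m x : ℝ) : ℝ :=
  x ^ 4 - y * x ^ 3 - (1 + β * m) * x ^ 2 + y * β * m * x + β * m ^ 2

section imageQuartic

variable {y β m : ℝ}

theorem continuous_imageQuartic : Continuous (imageQuartic y β m) := by
  unfold imageQuartic
  fun_prop

theorem imageQuartic_zero : imageQuartic y β m 0 = β * m ^ 2 := by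
  simp [imageQuartic]

theorem imageQuartic_of_sq_eq {s : ℝ} (hs : s ^ 2 = β * m) :
    imageQuartic y β m s = β * m * (m - 1) := by
  unfold imageQuartic
  linear_combination (s ^ 2 - y * s - 1) * hs

theorem imageQuartic_add_two_pos (hy : 0 ≤ y) (hβm : 0 < β * m) (hβm₁ : β * m < 1)
    (hm : 0 < m) : 0 < imageQuartic y β m (y + 2) := by
  have h : imageQuartic y β m (y + 2)
      = ((y + 2) ^ 2 - β * m) * (2 * y + 3) + β * m * (m - 1) := by
    unfold imageQuartic; ring
  rw [h]
  nlinarith [mul_pos hβm hm]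

theorem imageQuartic_neg_add_two_pos (hy : 0 ≤ y) (hβm : 0 < β * m) (hβm₁ : β * m < 1)
    (hm : 0 < m) : 0 < imageQuartic y β m (-(y + 2)) := by
  have h : imageQuartic y β m (-(y + 2))
      = ((y + 2) ^ 2 - β * m) * (2 * y ^ 2 + 6 * y + 3) + β * m * (m - 1) := by
    unfold imageQuartic; ring
  rw [h]
  nlinarith [mul_pos hβm hm]

theorem exists_four_roots_imageQuartic (hy : 0 ≤ y) (hβm : 0 < β * m) (hβm₁ : β * m < 1)
    (hm₀ : 0 < m) (hm₁ : m < 1) :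
    ∃ r₁ r₂ r₃ r₄, r₁ < r₂ ∧ r₂ < r₃ ∧ r₃ < r₄ ∧
      imageQuartic y β m r₁ = 0 ∧ imageQuartic y β m r₂ = 0 ∧
      imageQuartic y β m r₃ = 0 ∧ imageQuartic y β m r₄ = 0 := by
  set s := √(β * m)
  have hs : s ^ 2 = β * m := Real.sq_sqrt hβm.le
  have hs₀ : 0 < s := Real.sqrt_pos.mpr hβm
  have hs₁ : s < y + 2 := by nlinarith
  have hneg : imageQuartic y β m s < 0 ∧ imageQuartic y β m (-s) < 0 := by
    rw [imageQuartic_of_sq_eq hs, imageQuartic_of_sq_eq (by rwa [neg_sq])]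
    constructor <;> nlinarith
  have hzero : 0 < imageQuartic y β m 0 := by
    rw [imageQuartic_zero]; nlinarith [mul_pos hβm hm₀]
  obtain ⟨r₁, ⟨-, hr₁⟩, hf₁⟩ := intermediate_value_Ioo' (by linarith : -(y + 2) ≤ -s)
    continuous_imageQuartic.continuousOn
    ⟨hneg.2, imageQuartic_neg_add_two_pos hy hβm hβm₁ hm₀⟩
  obtain ⟨r₂, ⟨hr₂, hr₂'⟩, hf₂⟩ := intermediate_value_Ioo (by linarith : -s ≤ 0)
    continuous_imageQuartic.continuousOn ⟨hneg.2, hzero⟩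
  obtain ⟨r₃, ⟨hr₃, hr₃'⟩, hf₃⟩ := intermediate_value_Ioo' hs₀.le
    continuous_imageQuartic.continuousOn ⟨hneg.1, hzero⟩
  obtain ⟨r₄, ⟨hr₄, -⟩, hf₄⟩ := intermediate_value_Ioo hs₁.le
    continuous_imageQuartic.continuousOn
    ⟨hneg.1, imageQuartic_add_two_pos hy hβm hβm₁ hm₀⟩
  exact ⟨r₁, r₂, r₃, r₄, hr₁.trans hr₂, hr₂'.trans hr₃, hr₃'.trans hr₄, hf₁, hf₂, hf₃, hf₄⟩

theorem reducedQuartic_eq_imageQuartic {P Q R : ℝ}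
    (hP : P = -(3 * y ^ 2) / 8 - (1 + β * m))
    (hQ : Q = -(y ^ 3) / 8 - (y / 2) * (1 - β * m))
    (hR : R = -(3 * y ^ 4) / 256 - (y ^ 2 / 16) * (1 - 3 * β * m) + β * m ^ 2) (z : ℝ) :
    z ^ 4 + P * z ^ 2 + Q * z + R = imageQuartic y β m (z + y / 4) := by
  subst hP hQ hR
  unfold imageQuartic
  ring

theorem exists_reducedQuartic_eq_mul (hy : 0 ≤ y) (hβm : 0 < β * m) (hβm₁ : β * m < 1)
    (hm₀ : 0 < m) (hm₁ : m < 1) {P Q R : ℝ}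
    (hP : P = -(3 * y ^ 2) / 8 - (1 + β * m))
    (hQ : Q = -(y ^ 3) / 8 - (y / 2) * (1 - β * m))
    (hR : R = -(3 * y ^ 4) / 256 - (y ^ 2 / 16) * (1 - 3 * β * m) + β * m ^ 2) :
    ∃ t₁ t₂ t₃ t₄ : ℝ, ∀ z,
      z ^ 4 + P * z ^ 2 + Q * z + R = (z - t₁) * (z - t₂) * (z - t₃) * (z - t₄) := by
  obtain ⟨r₁, r₂, r₃, r₄, h₁₂, h₂₃, h₃₄, f₁, f₂, f₃, f₄⟩ :=
    exists_four_roots_imageQuartic hy hβm hβm₁ hm₀ hm₁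
  have root : ∀ r, imageQuartic y β m r = 0 →
      (r - y / 4) ^ 4 + 0 * (r - y / 4) ^ 3 + P * (r - y / 4) ^ 2 + Q * (r - y / 4) + R = 0 :=
    fun r hr => by rw [zero_mul, add_zero, reducedQuartic_eq_imageQuartic hP hQ hR,
      sub_add_cancel, hr]
  have shift_ne {r r' : ℝ} (h : r < r') : r - y / 4 ≠ r' - y / 4 := mt sub_left_inj.mp h.ne
  refine ⟨r₁ - y / 4, r₂ - y / 4, r₃ - y / 4, r₄ - y / 4, fun z => ?_⟩
  linear_combination quartic_eq_mul_of_roots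
    (shift_ne h₁₂) (shift_ne (h₁₂.trans h₂₃)) (shift_ne ((h₁₂.trans h₂₃).trans h₃₄))
    (shift_ne h₂₃) (shift_ne (h₂₃.trans h₃₄)) (shift_ne h₃₄)
    (root r₁ f₁) (root r₂ f₂) (root r₃ f₃) (root r₄ f₄) z

end imageQuartic

/-- For `y > 0`, `0 < β < 1`, `0 < m < 1`, the discriminant of the
cubic resolvent `z³ + A·z² + B·z + C` of the reduced image quartic satisfies
`D_res = ((3B − A²)/9)³ + ((2A³ − 9AB + 27C)/54)² ≤ 0`; hence the cubic resolvent has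
three real roots. -/
theorem two_point_lens_resolvent_discriminant
    (y β m : ℝ) (hy : 0 < y) (hβ : β ∈ Set.Ioo (0 : ℝ) 1)
    (hm : m ∈ Set.Ioo (0 : ℝ) 1)
    (P Q R A B C : ℝ)
    (hP : P = -(3 * y ^ 2) / 8 - (1 + β * m))
    (hQ : Q = -(y ^ 3) / 8 - (y / 2) * (1 - β * m))
    (hR : R = -(3 * y ^ 4) / 256 - (y ^ 2 / 16) * (1 - 3 * β * m) + β * m ^ 2)
    (hA : A = 2 * P) (hB : B = P ^ 2 - 4 * R) (hC : C = -Q ^ 2) :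
    ((3 * B - A ^ 2) / 9) ^ 3 + ((2 * A ^ 3 - 9 * A * B + 27 * C) / 54) ^ 2 ≤ 0 ∧
    ∃ z₁ z₂ z₃ : ℝ, ∀ z : ℝ,
      z ^ 3 + A * z ^ 2 + B * z + C = (z - z₁) * (z - z₂) * (z - z₃) := by
  obtain ⟨hβ₀, hβ₁⟩ := hβ
  obtain ⟨hm₀, hm₁⟩ := hm
  obtain ⟨t₁, t₂, t₃, t₄, hsplit⟩ := exists_reducedQuartic_eq_mul hy.le (mul_pos hβ₀ hm₀)
    (by nlinarith) hm₀ hm₁ hP hQ hR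
  have hres := resolvent_eq_mul_of_reduced_quartic_eq_mul hsplit
  subst hA hB hC
  exact ⟨cubic_discriminant_nonpos_of_eq_mul hres, _, _, _, hres⟩
end

section
/- Let 0 < β < 1, 0 < m < 1, and y > 0. Define F(x) = 1 − m/x² − (1 − m)/(x² − β·m) and J(x) = F(x)·(F(x) + x·F′(x)) for x with x ≠ 0 and x² ≠ β·m. Suppose x₁, x₂, x₃, x₄ are the four distinct real roots of the quartic x⁴ − y·x³ − (1 + β·m)·x² + y·β·m·x + β·m² = 0, and assume xᵢ² ≠ β·m and J(xᵢ) ≠ 0 for each i. Then the signed magnifications μᵢ = 1/J(xᵢ) satisfy μ₁ + μ₂ + μ₃ + μ₄ = 1. -/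
/-!
At an image `x` the lens equation gives `F x = y / x`, and differentiating `F` turns the
Jacobian into `J x = y · P'(x) / (x² (x² − β m))`, where `P` is the image quartic. Hence
`μ = (x⁴ − β m x²) / (y · P'(x))`, and summing `Q(xᵢ) / P'(xᵢ)` over the four roots of the
monic quartic `P` picks out the difference of the `x³`-coefficients of `Q` and `P`
(partial fractions of `Q / P`), which here is `y`.
-/

theorem cubic_coeffs_eq_zero_of_four_roots {a b c d x₁ x₂ x₃ x₄ : ℝ}
    (h₁₂ : x₁ ≠ x₂) (h₁₃ : x₁ ≠ x₃) (h₁₄ : x₁ ≠ x₄)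
    (h₂₃ : x₂ ≠ x₃) (h₂₄ : x₂ ≠ x₄) (h₃₄ : x₃ ≠ x₄)
    (e₁ : a * x₁ ^ 3 + b * x₁ ^ 2 + c * x₁ + d = 0)
    (e₂ : a * x₂ ^ 3 + b * x₂ ^ 2 + c * x₂ + d = 0)
    (e₃ : a * x₃ ^ 3 + b * x₃ ^ 2 + c * x₃ + d = 0)
    (e₄ : a * x₄ ^ 3 + b * x₄ ^ 2 + c * x₄ + d = 0) :
    a = 0 ∧ b = 0 ∧ c = 0 ∧ d = 0 := by
  -- successive divided differences
  have g₁₂ : a * (x₁ ^ 2 + x₁ * x₂ + x₂ ^ 2) + b * (x₁ + x₂) + c = 0 :=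
    mul_left_cancel₀ (sub_ne_zero.mpr h₁₂) (by linear_combination e₁ - e₂)
  have g₁₃ : a * (x₁ ^ 2 + x₁ * x₃ + x₃ ^ 2) + b * (x₁ + x₃) + c = 0 :=
    mul_left_cancel₀ (sub_ne_zero.mpr h₁₃) (by linear_combination e₁ - e₃)
  have g₁₄ : a * (x₁ ^ 2 + x₁ * x₄ + x₄ ^ 2) + b * (x₁ + x₄) + c = 0 :=
    mul_left_cancel₀ (sub_ne_zero.mpr h₁₄) (by linear_combination e₁ - e₄)
  have k₃ : a * (x₁ + x₂ + x₃) + b = 0 :=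
    mul_left_cancel₀ (sub_ne_zero.mpr h₂₃) (by linear_combination g₁₂ - g₁₃)
  have k₄ : a * (x₁ + x₂ + x₄) + b = 0 :=
    mul_left_cancel₀ (sub_ne_zero.mpr h₂₄) (by linear_combination g₁₂ - g₁₄)
  have ha : a = 0 := mul_left_cancel₀ (sub_ne_zero.mpr h₃₄) (by linear_combination k₃ - k₄)
  have hb : b = 0 := by linear_combination k₃ - (x₁ + x₂ + x₃) * ha
  have hc : c = 0 := by
    linear_combination g₁₂ - (x₁ ^ 2 + x₁ * x₂ + x₂ ^ 2) * ha - (x₁ + x₂) * hb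
  exact ⟨ha, hb, hc, by linear_combination e₁ - x₁ ^ 3 * ha - x₁ ^ 2 * hb - x₁ * hc⟩

theorem quartic_vieta_s16 {a b c d x₁ x₂ x₃ x₄ : ℝ}
    (h₁₂ : x₁ ≠ x₂) (h₁₃ : x₁ ≠ x₃) (h₁₄ : x₁ ≠ x₄)
    (h₂₃ : x₂ ≠ x₃) (h₂₄ : x₂ ≠ x₄) (h₃₄ : x₃ ≠ x₄)
    (e₁ : x₁ ^ 4 + a * x₁ ^ 3 + b * x₁ ^ 2 + c * x₁ + d = 0)
    (e₂ : x₂ ^ 4 + a * x₂ ^ 3 + b * x₂ ^ 2 + c * x₂ + d = 0)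
    (e₃ : x₃ ^ 4 + a * x₃ ^ 3 + b * x₃ ^ 2 + c * x₃ + d = 0)
    (e₄ : x₄ ^ 4 + a * x₄ ^ 3 + b * x₄ ^ 2 + c * x₄ + d = 0) :
    a = -(x₁ + x₂ + x₃ + x₄) ∧
      b = x₁ * x₂ + x₁ * x₃ + x₁ * x₄ + x₂ * x₃ + x₂ * x₄ + x₃ * x₄ ∧
      c = -(x₁ * x₂ * x₃ + x₁ * x₂ * x₄ + x₁ * x₃ * x₄ + x₂ * x₃ * x₄) ∧
      d = x₁ * x₂ * x₃ * x₄ := by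
  -- the quartic minus `(x - x₁)(x - x₂)(x - x₃)(x - x₄)` is a cubic with four roots
  obtain ⟨ha, hb, hc, hd⟩ := cubic_coeffs_eq_zero_of_four_roots
    (a := a + (x₁ + x₂ + x₃ + x₄))
    (b := b - (x₁ * x₂ + x₁ * x₃ + x₁ * x₄ + x₂ * x₃ + x₂ * x₄ + x₃ * x₄))
    (c := c + (x₁ * x₂ * x₃ + x₁ * x₂ * x₄ + x₁ * x₃ * x₄ + x₂ * x₃ * x₄))
    (d := d - x₁ * x₂ * x₃ * x₄) h₁₂ h₁₃ h₁₄ h₂₃ h₂₄ h₃₄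
    (by linear_combination e₁) (by linear_combination e₂)
    (by linear_combination e₃) (by linear_combination e₄)
  exact ⟨by linarith, by linarith, by linarith, by linarith⟩

theorem sum_div_deriv_quartic {a b c d p q r s x₁ x₂ x₃ x₄ : ℝ} {Q dP : ℝ → ℝ}
    (hQ : ∀ x, Q x = x ^ 4 + p * x ^ 3 + q * x ^ 2 + r * x + s)
    (hdP : ∀ x, dP x = 4 * x ^ 3 + 3 * a * x ^ 2 + 2 * b * x + c)
    (h₁₂ : x₁ ≠ x₂) (h₁₃ : x₁ ≠ x₃) (h₁₄ : x₁ ≠ x₄)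
    (h₂₃ : x₂ ≠ x₃) (h₂₄ : x₂ ≠ x₄) (h₃₄ : x₃ ≠ x₄)
    (e₁ : x₁ ^ 4 + a * x₁ ^ 3 + b * x₁ ^ 2 + c * x₁ + d = 0)
    (e₂ : x₂ ^ 4 + a * x₂ ^ 3 + b * x₂ ^ 2 + c * x₂ + d = 0)
    (e₃ : x₃ ^ 4 + a * x₃ ^ 3 + b * x₃ ^ 2 + c * x₃ + d = 0)
    (e₄ : x₄ ^ 4 + a * x₄ ^ 3 + b * x₄ ^ 2 + c * x₄ + d = 0) :
    Q x₁ / dP x₁ + Q x₂ / dP x₂ + Q x₃ / dP x₃ + Q x₄ / dP x₄ = p - a := by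
  obtain ⟨ha, hb, hc, -⟩ := quartic_vieta_s16 h₁₂ h₁₃ h₁₄ h₂₃ h₂₄ h₃₄ e₁ e₂ e₃ e₄
  have hdP₁ : dP x₁ = (x₁ - x₂) * (x₁ - x₃) * (x₁ - x₄) := by
    rw [hdP, ha, hb, hc]; ring
  have hdP₂ : dP x₂ = (x₂ - x₁) * (x₂ - x₃) * (x₂ - x₄) := by
    rw [hdP, ha, hb, hc]; ring
  have hdP₃ : dP x₃ = (x₃ - x₁) * (x₃ - x₂) * (x₃ - x₄) := by
    rw [hdP, ha, hb, hc]; ring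
  have hdP₄ : dP x₄ = (x₄ - x₁) * (x₄ - x₂) * (x₄ - x₃) := by
    rw [hdP, ha, hb, hc]; ring
  rw [hdP₁, hdP₂, hdP₃, hdP₄, hQ, hQ, hQ, hQ, ha]
  field_simp [sub_ne_zero, h₁₂, h₁₃, h₁₄, h₂₃, h₂₄, h₃₄, h₁₂.symm, h₁₃.symm, h₁₄.symm,
    h₂₃.symm, h₂₄.symm, h₃₄.symm]
  ring

theorem hasDerivAt_lensF (β m : ℝ) {x : ℝ} (hx : x ≠ 0) (hxβm : x ^ 2 ≠ β * m) :
    HasDerivAt (fun t => 1 - m / t ^ 2 - (1 - m) / (t ^ 2 - β * m))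
      (2 * m * x / (x ^ 2) ^ 2 + 2 * (1 - m) * x / (x ^ 2 - β * m) ^ 2) x := by
  have hsq : HasDerivAt (fun t : ℝ => t ^ 2) (2 * x) x := by simpa using hasDerivAt_pow 2 x
  refine (((hasDerivAt_const x 1).sub ((hasDerivAt_const x m).div hsq (pow_ne_zero 2 hx))).sub
    ((hasDerivAt_const x (1 - m)).div (hsq.sub_const (β * m))
      (sub_ne_zero.mpr hxβm))).congr_deriv ?_
  field_simp
  ring

theorem jacobian_mul_eq_of_isImage {β m y x : ℝ} {F J : ℝ → ℝ}
    (hF : ∀ x : ℝ, F x = 1 - m / x ^ 2 - (1 - m) / (x ^ 2 - β * m))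
    (hJ : ∀ x : ℝ, J x = F x * (F x + x * deriv F x))
    (hx : x ≠ 0) (hxβm : x ^ 2 ≠ β * m)
    (hroot : x ^ 4 - y * x ^ 3 - (1 + β * m) * x ^ 2 + y * (β * m) * x + β * m ^ 2 = 0) :
    J x * (x ^ 2 * (x ^ 2 - β * m)) =
      y * (4 * x ^ 3 - 3 * y * x ^ 2 - 2 * (1 + β * m) * x + y * (β * m)) := by
  have hD : x ^ 2 - β * m ≠ 0 := sub_ne_zero.mpr hxβm
  -- `field_simp` only sees `hD` once `x ^ 2 - β * m` is an atom
  have hFx : F x = y / x := by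
    rw [hF]
    generalize hD' : x ^ 2 - β * m = D at hD ⊢
    field_simp
    subst hD'
    linear_combination hroot
  have hdF : deriv F x = 2 * m * x / (x ^ 2) ^ 2 + 2 * (1 - m) * x / (x ^ 2 - β * m) ^ 2 := by
    rw [show F = _ from funext hF]
    exact (hasDerivAt_lensF β m hx hxβm).deriv
  rw [hJ, hFx, hdF]
  generalize hD' : x ^ 2 - β * m = D at hD ⊢
  field_simp
  subst hD'
  linear_combination 2 * y * (β * m - 2 * x ^ 2) * hroot

theorem one_div_jacobian_eq_of_isImage {β m y x : ℝ} {F J : ℝ → ℝ}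
    (hF : ∀ x : ℝ, F x = 1 - m / x ^ 2 - (1 - m) / (x ^ 2 - β * m))
    (hJ : ∀ x : ℝ, J x = F x * (F x + x * deriv F x))
    (hx : x ≠ 0) (hxβm : x ^ 2 ≠ β * m)
    (hroot : x ^ 4 - y * x ^ 3 - (1 + β * m) * x ^ 2 + y * (β * m) * x + β * m ^ 2 = 0) :
    1 / J x = x ^ 2 * (x ^ 2 - β * m) /
      (4 * x ^ 3 - 3 * y * x ^ 2 - 2 * (1 + β * m) * x + y * (β * m)) / y := by
  have hD : x ^ 2 * (x ^ 2 - β * m) ≠ 0 := mul_ne_zero (pow_ne_zero 2 hx) (sub_ne_zero.mpr hxβm)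
  rw [one_div, ← div_mul_cancel_right₀ hD, jacobian_mul_eq_of_isImage hF hJ hx hxβm hroot,
    div_div, mul_comm y]

theorem two_point_lens_magnification_invariant_general
    (β m y : ℝ) (hβ : β ∈ Set.Ioo (0 : ℝ) 1) (hm : m ∈ Set.Ioo (0 : ℝ) 1)
    (hy : 0 < y)
    (F J : ℝ → ℝ)
    (hF : ∀ x : ℝ, F x = 1 - m / x ^ 2 - (1 - m) / (x ^ 2 - β * m))
    (hJ : ∀ x : ℝ, J x = F x * (F x + x * deriv F x))
    (x₁ x₂ x₃ x₄ : ℝ)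
    (hdist : x₁ ≠ x₂ ∧ x₁ ≠ x₃ ∧ x₁ ≠ x₄ ∧ x₂ ≠ x₃ ∧ x₂ ≠ x₄ ∧ x₃ ≠ x₄)
    (hroot₁ : x₁ ^ 4 - y * x₁ ^ 3 - (1 + β * m) * x₁ ^ 2 + y * (β * m) * x₁ + β * m ^ 2 = 0)
    (hroot₂ : x₂ ^ 4 - y * x₂ ^ 3 - (1 + β * m) * x₂ ^ 2 + y * (β * m) * x₂ + β * m ^ 2 = 0)
    (hroot₃ : x₃ ^ 4 - y * x₃ ^ 3 - (1 + β * m) * x₃ ^ 2 + y * (β * m) * x₃ + β * m ^ 2 = 0)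
    (hroot₄ : x₄ ^ 4 - y * x₄ ^ 3 - (1 + β * m) * x₄ ^ 2 + y * (β * m) * x₄ + β * m ^ 2 = 0)
    (hne₁ : x₁ ^ 2 ≠ β * m) (hne₂ : x₂ ^ 2 ≠ β * m)
    (hne₃ : x₃ ^ 2 ≠ β * m) (hne₄ : x₄ ^ 2 ≠ β * m) :
    1 / J x₁ + 1 / J x₂ + 1 / J x₃ + 1 / J x₄ = 1 := by
  obtain ⟨h₁₂, h₁₃, h₁₄, h₂₃, h₂₄, h₃₄⟩ := hdist
  have hβm : β * m ^ 2 ≠ 0 := (mul_pos hβ.1 (pow_pos hm.1 2)).ne'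
  have hμ {x : ℝ} (hxβm : x ^ 2 ≠ β * m)
      (hroot : x ^ 4 - y * x ^ 3 - (1 + β * m) * x ^ 2 + y * (β * m) * x + β * m ^ 2 = 0) :=
    one_div_jacobian_eq_of_isImage hF hJ (by rintro rfl; exact hβm (by linear_combination hroot))
      hxβm hroot
  have hsum := sum_div_deriv_quartic (a := -y) (b := -(1 + β * m)) (c := y * (β * m))
    (d := β * m ^ 2) (p := 0) (q := -(β * m)) (r := 0) (s := 0)
    (Q := fun x => x ^ 2 * (x ^ 2 - β * m))
    (dP := fun x => 4 * x ^ 3 - 3 * y * x ^ 2 - 2 * (1 + β * m) * x + y * (β * m))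
    (fun _ => by ring) (fun _ => by ring) h₁₂ h₁₃ h₁₄ h₂₃ h₂₄ h₃₄
    (by linear_combination hroot₁) (by linear_combination hroot₂)
    (by linear_combination hroot₃) (by linear_combination hroot₄)
  beta_reduce at hsum
  rw [hμ hne₁ hroot₁, hμ hne₂ hroot₂, hμ hne₃ hroot₃, hμ hne₄ hroot₄, ← add_div, ← add_div,
    ← add_div, hsum, zero_sub, neg_neg, div_self hy.ne']

/-- **magnification invariant, two point lenses.** With
`F x = 1 − m/x² − (1−m)/(x² − β·m)` and Jacobian `J x = F x·(F x + x·F' x)`, if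
`x₁, x₂, x₃, x₄` are the four distinct real roots of the image quartic
`x⁴ − y·x³ − (1 + β·m)·x² + y·β·m·x + β·m² = 0` with `xᵢ² ≠ β·m` and `J xᵢ ≠ 0`,
then the signed magnifications `μᵢ = 1/J xᵢ` sum to `1`. -/
theorem two_point_lens_magnification_invariant
    (β m y : ℝ) (hβ : β ∈ Set.Ioo (0 : ℝ) 1) (hm : m ∈ Set.Ioo (0 : ℝ) 1)
    (hy : 0 < y)
    (F J : ℝ → ℝ)
    (hF : ∀ x : ℝ, F x = 1 - m / x ^ 2 - (1 - m) / (x ^ 2 - β * m))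
    (hJ : ∀ x : ℝ, J x = F x * (F x + x * deriv F x))
    (x₁ x₂ x₃ x₄ : ℝ)
    (hdist : x₁ ≠ x₂ ∧ x₁ ≠ x₃ ∧ x₁ ≠ x₄ ∧ x₂ ≠ x₃ ∧ x₂ ≠ x₄ ∧ x₃ ≠ x₄)
    (hroot₁ : x₁ ^ 4 - y * x₁ ^ 3 - (1 + β * m) * x₁ ^ 2 + y * (β * m) * x₁ + β * m ^ 2 = 0)
    (hroot₂ : x₂ ^ 4 - y * x₂ ^ 3 - (1 + β * m) * x₂ ^ 2 + y * (β * m) * x₂ + β * m ^ 2 = 0)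
    (hroot₃ : x₃ ^ 4 - y * x₃ ^ 3 - (1 + β * m) * x₃ ^ 2 + y * (β * m) * x₃ + β * m ^ 2 = 0)
    (hroot₄ : x₄ ^ 4 - y * x₄ ^ 3 - (1 + β * m) * x₄ ^ 2 + y * (β * m) * x₄ + β * m ^ 2 = 0)
    (hne₁ : x₁ ^ 2 ≠ β * m) (hne₂ : x₂ ^ 2 ≠ β * m)
    (hne₃ : x₃ ^ 2 ≠ β * m) (hne₄ : x₄ ^ 2 ≠ β * m)
    (hJ₁ : J x₁ ≠ 0) (hJ₂ : J x₂ ≠ 0) (hJ₃ : J x₃ ≠ 0) (hJ₄ : J x₄ ≠ 0) :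
    1 / J x₁ + 1 / J x₂ + 1 / J x₃ + 1 / J x₄ = 1 :=
  two_point_lens_magnification_invariant_general β m y hβ hm hy F J hF hJ x₁ x₂ x₃ x₄ hdist hroot₁
    hroot₂ hroot₃ hroot₄ hne₁ hne₂ hne₃ hne₄
end
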